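/- Let K be a field of arbitrary characteristic and R = K[x_1,…,x_n]. For every r ≥ 1, every j ≥ 1, each 1 ≤ i ≤ n, and every f ∈ R, the Euler operators satisfy E_r(∂_i^{[j]}(f)) = ∂_i^{[j]}(E_r(f)) − Σ_{k=1}^{min(j,r)} binom(j,k)·E_{r−k}(∂_i^{[j]}(f)), where E_0 is the identity. -/

import Mathlib

/-- The divided-power partial derivative `∂_i^{[j]}` on `K[x_1,…,x_n]`, determined on
monomials by `∂_i^{[j]}(x^a) = binom(a_i, j) • x^{a - j·e_i}` (zero when `a_i < j`). -/
noncomputable def dpDeriv (K : Type*) [CommRing K] {n : ℕ} (i : Fin n) (j : ℕ) :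
    MvPolynomial (Fin n) K →ₗ[K] MvPolynomial (Fin n) K :=
  (Finsupp.lsum K fun a : Fin n →₀ ℕ =>
    (((a i).choose j : K)) •
      (MvPolynomial.monomial (a - Finsupp.single i j) : K →ₗ[K] MvPolynomial (Fin n) K))
    ∘ₗ (AddMonoidAlgebra.coeffLinearEquiv K).toLinearMap

/-- The `r`-th Euler operator `E_r = Σ_{i_1+⋯+i_n=r} x_1^{i_1}⋯x_n^{i_n} ∂_1^{[i_1]}⋯∂_n^{[i_n]}`
on `K[x_1,…,x_n]`. -/
noncomputable def eulerOp (K : Type*) [CommRing K] (n : ℕ) (r : ℕ) :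
    MvPolynomial (Fin n) K →ₗ[K] MvPolynomial (Fin n) K :=
  ∑ c ∈ Finset.Nat.antidiagonalTuple n r,
    LinearMap.mulLeft K (MvPolynomial.monomial (Finsupp.equivFunOnFinite.symm c) (1 : K)) ∘ₗ
      ((List.finRange n).map fun i => dpDeriv K i (c i)).prod

/-!
On monomials both operators act by binomial coefficients:
`∂_i^{[j]} x^a = binom(a_i, j) x^{a - j e_i}` and `E_r x^a = binom(|a|, r) x^a`, the latter by
the multinomial Vandermonde identity `Σ_{|c| = r} Π_t binom(a_t, c_t) = binom(|a|, r)`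
(compare coefficients of `X^r` in `Π_t (1 + X)^{a_t} = (1 + X)^{|a|}`). Since `∂_i^{[j]}` lowers
the total degree by `j`, the commutation formula on `x^a` reduces to Vandermonde's identity
`binom(m + j, r) = Σ_k binom(j, k) binom(m, r - k)` with `m = |a| - j`.
-/

open Finset

theorem Nat.add_choose_eq_choose_add_sum_Icc (j m r : ℕ) :
    (j + m).choose r = m.choose r + ∑ k ∈ Icc 1 (min j r), j.choose k * m.choose (r - k) := by
  have hvanish : ∀ k ∈ Icc 1 r, k ∉ Icc 1 (min j r) → j.choose k * m.choose (r - k) = 0 := by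
    intro k hk hk'
    simp only [mem_Icc] at hk hk'
    rw [Nat.choose_eq_zero_of_lt (by omega), zero_mul]
  rw [Nat.add_choose_eq,
    Nat.sum_antidiagonal_eq_sum_range_succ (fun k l => j.choose k * m.choose l), range_eq_Ico,
    sum_eq_sum_Ico_succ_bot (Nat.succ_pos r), zero_add, Nat.succ_eq_add_one,
    Ico_add_one_right_eq_Icc, ← sum_subset (Icc_subset_Icc le_rfl (min_le_right j r)) hvanish]
  simp

open Polynomial in
theorem Finset.Nat.sum_antidiagonalTuple_prod_choose {k : ℕ} (a : Fin k → ℕ) (r : ℕ) :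
    ∑ c ∈ Nat.antidiagonalTuple k r, ∏ t, (a t).choose (c t) = (∑ t, a t).choose r := by
  have h := PowerSeries.coeff_prod
    (fun t => coeToPowerSeries.ringHom ((1 + X : ℕ[X]) ^ a t)) r univ
  rw [← map_prod, prod_pow_eq_pow_sum] at h
  simp only [coeToPowerSeries.ringHom_apply, coeff_coe, coeff_one_add_X_pow, Nat.cast_id] at h
  rw [h, ← piAntidiag_univ_fin_eq_antidiagonalTuple]
  exact (sum_equiv Finsupp.equivFunOnFinite (by simp [mem_piAntidiag]) (by simp)).symm

section

open MvPolynomial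

variable {K : Type*} [CommRing K] {n : ℕ}

theorem dpDeriv_monomial (i : Fin n) (j : ℕ) (a : Fin n →₀ ℕ) (b : K) :
    dpDeriv K i j (monomial a b) = ((a i).choose j : K) • monomial (a - Finsupp.single i j) b := by
  simp [dpDeriv, ← single_eq_monomial]

theorem list_prod_dpDeriv_monomial (c : Fin n → ℕ) {l : List (Fin n)} (hl : l.Nodup)
    (a : Fin n →₀ ℕ) (b : K) :
    (l.map fun t => dpDeriv K t (c t)).prod (monomial a b) =
      ((l.map fun t => (a t).choose (c t)).prod : K) •
        monomial (a - (l.map fun t => Finsupp.single t (c t)).sum) b := by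
  induction l with
  | nil => simp
  | cons s l ih =>
    obtain ⟨hs, hl⟩ := List.nodup_cons.1 hl
    have hsum : (l.map fun t => Finsupp.single t (c t)).sum s = 0 := by
      rw [← Finsupp.applyAddHom_apply, map_list_sum, List.map_map]
      refine List.sum_eq_zero fun x hx => ?_
      obtain ⟨t, ht, rfl⟩ := List.mem_map.1 hx
      exact Finsupp.single_eq_of_ne (by rintro rfl; exact hs ht)
    simp only [List.map_cons, List.prod_cons, List.sum_cons, Module.End.mul_apply, ih hl,
      map_smul, dpDeriv_monomial, Finsupp.tsub_apply, hsum, tsub_zero, tsub_tsub, smul_smul,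
      Nat.cast_mul, mul_comm, add_comm]

theorem eulerOp_monomial (r : ℕ) (a : Fin n →₀ ℕ) (b : K) :
    eulerOp K n r (monomial a b) = (a.degree.choose r : K) • monomial a b := by
  have hterm : ∀ c : Fin n → ℕ,
      (LinearMap.mulLeft K (monomial (Finsupp.equivFunOnFinite.symm c) (1 : K)) ∘ₗ
        ((List.finRange n).map fun i => dpDeriv K i (c i)).prod) (monomial a b) =
      ((∏ t, (a t).choose (c t) : ℕ) : K) • monomial a b := by
    intro c
    rw [LinearMap.comp_apply, list_prod_dpDeriv_monomial c (List.nodup_finRange n), map_smul,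
      LinearMap.mulLeft_apply, monomial_mul, one_mul, ← Fin.prod_univ_def, ← Fin.sum_univ_def,
      ← Finsupp.equivFunOnFinite_symm_eq_sum]
    by_cases hle : Finsupp.equivFunOnFinite.symm c ≤ a
    · rw [add_tsub_cancel_of_le hle]
    · obtain ⟨t, ht⟩ : ∃ t, a t < c t := by simpa [Finsupp.le_def] using hle
      rw [prod_eq_zero (mem_univ t) (Nat.choose_eq_zero_of_lt ht)]
      simp
  rw [eulerOp, LinearMap.sum_apply, sum_congr rfl fun c _ => hterm c, ← sum_smul, ← Nat.cast_sum,
    Finset.Nat.sum_antidiagonalTuple_prod_choose, Finsupp.degree_eq_sum]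

theorem eulerOp_dpDeriv_monomial (r j : ℕ) (i : Fin n) (a : Fin n →₀ ℕ) (b : K) :
    eulerOp K n r (dpDeriv K i j (monomial a b)) =
      dpDeriv K i j (eulerOp K n r (monomial a b)) -
        ∑ k ∈ Icc 1 (min j r),
          (j.choose k : K) • eulerOp K n (r - k) (dpDeriv K i j (monomial a b)) := by
  by_cases h : j ≤ a i
  · obtain ⟨a', rfl⟩ : ∃ a', a = a' + Finsupp.single i j :=
      ⟨a - Finsupp.single i j, (tsub_add_cancel_of_le (Finsupp.single_le_iff.2 h)).symm⟩
    simp only [dpDeriv_monomial, add_tsub_cancel_right, map_smul, eulerOp_monomial, map_add,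
      Finsupp.degree_single, smul_smul, ← sum_smul, ← sub_smul]
    congr 1
    rw [add_comm a'.degree j, Nat.add_choose_eq_choose_add_sum_Icc]
    push_cast
    simp only [mul_left_comm (j.choose _ : K), ← mul_sum]
    ring
  · simp [dpDeriv_monomial, eulerOp_monomial, Nat.choose_eq_zero_of_lt (not_le.1 h)]

end

theorem eulerOp_dpDeriv_general (K : Type*) [Field K] (n : ℕ) (r j : ℕ)
    (i : Fin n) (f : MvPolynomial (Fin n) K) :
    eulerOp K n r (dpDeriv K i j f) =
      dpDeriv K i j (eulerOp K n r f) -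
        ∑ k ∈ Finset.Icc 1 (min j r),
          (j.choose k : K) • eulerOp K n (r - k) (dpDeriv K i j f) := by
  induction f using MvPolynomial.induction_on' with
  | monomial a b => exact eulerOp_dpDeriv_monomial r j i a b
  | add p q hp hq =>
    simp only [map_add, smul_add, sum_add_distrib, hp, hq]
    abel

/-- For every `r ≥ 1`, `j ≥ 1`, each `i`, and every polynomial `f`,
`E_r(∂_i^{[j]}(f)) = ∂_i^{[j]}(E_r(f)) − Σ_{k=1}^{min(j,r)} binom(j,k) • E_{r-k}(∂_i^{[j]}(f))`,
where `E_0` is the identity. -/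
theorem eulerOp_dpDeriv (K : Type*) [Field K] (n : ℕ) (r j : ℕ) (hr : 1 ≤ r) (hj : 1 ≤ j)
    (i : Fin n) (f : MvPolynomial (Fin n) K) :
    eulerOp K n r (dpDeriv K i j f) =
      dpDeriv K i j (eulerOp K n r f) -
        ∑ k ∈ Finset.Icc 1 (min j r),
          (j.choose k : K) • eulerOp K n (r - k) (dpDeriv K i j f) :=
  eulerOp_dpDeriv_general K n r j i f
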